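/- Let p ∈ (0,1), n ≥ 2, and let x₀, x₁, ..., x_{n-1} be i.i.d. random variables with the geometric(p) distribution P(x = i) = p(1-p)^{i-1} for integers i ≥ 1. Define the perimeter P_n := 2n + x₀ + x_{n-1} + Σ_{i=1}^{n-1} |x_i - x_{i-1}|. Then E(P_n) = (2 + (2 + 2p - 2p²)·n) / (p(2 - p)). -/

import Mathlib

open MeasureTheory ProbabilityTheory
open scoped ENNReal

/-- The geometric(p) probability measure on `ℕ`: it assigns mass `p * (1 - p)^(i - 1)`
to each integer `i ≥ 1`. -/
noncomputable def geomMeasure (p : ℝ) : Measure ℕ :=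
  Measure.sum (fun i : ℕ => (ENNReal.ofReal (p * (1 - p) ^ i)) • Measure.dirac (i + 1))

/-!
An `ℕ`-valued random variable satisfies `E N = ∑ₖ P(N > k)`, and a geometric(p) letter has
`P(N > k) = (1 - p)^k`, so its mean is `1/p`. For two independent letters the minimum has tails
`(1 - p)^(2k)`, so it is geometric with parameter `p(2 - p)`, and `|X - Y| = X + Y - 2 min(X, Y)`
gives `E|X - Y| = 2/p - 2/(p(2 - p)) = 2(1 - p)/(p(2 - p))`. Linearity of expectation adds these up.
-/

section Tail

variable {Ω : Type*} [MeasurableSpace Ω] {μ : Measure Ω} {N : Ω → ℕ} {q : ℝ}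

lemma lintegral_natCast_eq_tsum_measure_lt (hN : Measurable N) :
    ∫⁻ ω, (N ω : ℝ≥0∞) ∂μ = ∑' k : ℕ, μ {ω | k < N ω} := by
  have hset (k : ℕ) : MeasurableSet {ω | k < N ω} := hN measurableSet_Ioi
  have hsum (ω : Ω) : (N ω : ℝ≥0∞) = ∑' k : ℕ, {ω | k < N ω}.indicator 1 ω := by
    rw [show (N ω : ℝ≥0∞) = ∑' k : ℕ, (Set.Iio (N ω)).indicator 1 k by rw [← tsum_subtype]; simp]
    rfl
  simp_rw [hsum, ← lintegral_indicator_one (hset _)]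
  exact lintegral_tsum fun k => (measurable_one.indicator (hset k)).aemeasurable

lemma lintegral_natCast_of_measure_lt_eq_pow (hN : Measurable N) (hq0 : 0 ≤ q) (hq1 : q < 1)
    (htail : ∀ k : ℕ, μ {ω | k < N ω} = ENNReal.ofReal (q ^ k)) :
    ∫⁻ ω, (N ω : ℝ≥0∞) ∂μ = ENNReal.ofReal (1 - q)⁻¹ := by
  rw [lintegral_natCast_eq_tsum_measure_lt hN, funext htail,
    ← ENNReal.ofReal_tsum_of_nonneg (fun k => pow_nonneg hq0 k)
      (summable_geometric_of_lt_one hq0 hq1),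
    tsum_geometric_of_lt_one hq0 hq1]

lemma integrable_natCast_of_measure_lt_eq_pow (hN : Measurable N) (hq0 : 0 ≤ q) (hq1 : q < 1)
    (htail : ∀ k : ℕ, μ {ω | k < N ω} = ENNReal.ofReal (q ^ k)) :
    Integrable (fun ω => (N ω : ℝ)) μ := by
  simpa using integrable_toReal_of_lintegral_ne_top (f := fun ω => (N ω : ℝ≥0∞))
    (measurable_from_nat.comp hN).aemeasurable
    (by rw [lintegral_natCast_of_measure_lt_eq_pow hN hq0 hq1 htail]; exact ENNReal.ofReal_ne_top)

lemma integral_natCast_of_measure_lt_eq_pow (hN : Measurable N) (hq0 : 0 ≤ q) (hq1 : q < 1)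
    (htail : ∀ k : ℕ, μ {ω | k < N ω} = ENNReal.ofReal (q ^ k)) :
    ∫ ω, (N ω : ℝ) ∂μ = (1 - q)⁻¹ := by
  have h := integral_toReal (μ := μ) (measurable_from_nat.comp hN).aemeasurable
    (Filter.Eventually.of_forall fun ω => ENNReal.natCast_lt_top (N ω))
  simp only [Function.comp_apply, ENNReal.toReal_natCast] at h
  rw [h, lintegral_natCast_of_measure_lt_eq_pow hN hq0 hq1 htail,
    ENNReal.toReal_ofReal (inv_nonneg.2 (by linarith))]

end Tail

lemma ProbabilityTheory.IndepFun.measure_lt_min {Ω α : Type*} [MeasurableSpace Ω]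
    {μ : Measure Ω} [LinearOrder α] [TopologicalSpace α] [OrderClosedTopology α]
    [MeasurableSpace α] [OpensMeasurableSpace α] {X Y : Ω → α} (hXY : IndepFun X Y μ) (a : α) :
    μ {ω | a < min (X ω) (Y ω)} = μ {ω | a < X ω} * μ {ω | a < Y ω} := by
  simp_rw [lt_min_iff]
  exact hXY.measure_inter_preimage_eq_mul _ _ measurableSet_Ioi measurableSet_Ioi

lemma integral_abs_sub_of_indepFun {Ω : Type*} [MeasurableSpace Ω] {μ : Measure Ω}
    {X Y : Ω → ℕ} {q r : ℝ} (hX : Measurable X) (hY : Measurable Y) (hXY : IndepFun X Y μ)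
    (hq0 : 0 ≤ q) (hq1 : q < 1) (hr0 : 0 ≤ r) (hr1 : r < 1)
    (hXt : ∀ k : ℕ, μ {ω | k < X ω} = ENNReal.ofReal (q ^ k))
    (hYt : ∀ k : ℕ, μ {ω | k < Y ω} = ENNReal.ofReal (r ^ k)) :
    ∫ ω, |(X ω : ℝ) - Y ω| ∂μ = (1 - q)⁻¹ + (1 - r)⁻¹ - 2 * (1 - q * r)⁻¹ := by
  have hM := hX.min hY
  have hqr0 : 0 ≤ q * r := mul_nonneg hq0 hr0
  have hqr1 : q * r < 1 := by nlinarith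
  have hMt (k : ℕ) : μ {ω | k < min (X ω) (Y ω)} = ENNReal.ofReal ((q * r) ^ k) := by
    rw [hXY.measure_lt_min, hXt, hYt, ← ENNReal.ofReal_mul (pow_nonneg hq0 k), mul_pow]
  have hXi := integrable_natCast_of_measure_lt_eq_pow hX hq0 hq1 hXt
  have hYi := integrable_natCast_of_measure_lt_eq_pow hY hr0 hr1 hYt
  have hMi := integrable_natCast_of_measure_lt_eq_pow hM hqr0 hqr1 hMt
  have habs (ω : Ω) : |(X ω : ℝ) - Y ω| = X ω + Y ω - 2 * (min (X ω) (Y ω) : ℕ) := by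
    rw [Nat.cast_min, ← max_sub_min_eq_abs', ← min_add_max (X ω : ℝ)]
    ring
  simp_rw [habs]
  rw [integral_sub (f := fun ω => (X ω : ℝ) + Y ω) (hXi.add hYi) (hMi.const_mul 2),
    integral_add hXi hYi, integral_const_mul,
    integral_natCast_of_measure_lt_eq_pow hX hq0 hq1 hXt,
    integral_natCast_of_measure_lt_eq_pow hY hr0 hr1 hYt,
    integral_natCast_of_measure_lt_eq_pow hM hqr0 hqr1 hMt]

lemma geomMeasure_Ioi {p : ℝ} (hp0 : 0 < p) (hp1 : p ≤ 1) (k : ℕ) :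
    geomMeasure p (Set.Ioi k) = ENNReal.ofReal ((1 - p) ^ k) := by
  have hq : 0 ≤ 1 - p := by linarith
  set f : ℕ → ℝ≥0∞ := fun i => ENNReal.ofReal (p * (1 - p) ^ i) * (Set.Ioi k).indicator 1 (i + 1)
  have hsupp : Function.support f ⊆ Set.range (· + k) := by
    refine Function.support_subset_iff'.2 fun i hi => ?_
    have hout : i + 1 ∉ Set.Ioi k := fun h => hi ⟨i - k, by simp only [Set.mem_Ioi] at h ⊢; omega⟩
    simp only [f, Set.indicator_of_notMem hout, mul_zero]
  have hshift (j : ℕ) :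
      f (j + k) = ENNReal.ofReal ((1 - p) ^ k) * (ENNReal.ofReal p * ENNReal.ofReal (1 - p) ^ j) := by
    have hmem : j + k + 1 ∈ Set.Ioi k := by simp only [Set.mem_Ioi]; omega
    rw [← ENNReal.ofReal_pow hq, ← ENNReal.ofReal_mul hp0.le,
      ← ENNReal.ofReal_mul (pow_nonneg hq _)]
    simp only [f, Set.indicator_of_mem hmem, Pi.one_apply, mul_one]
    ring_nf
  have hp : 1 - ENNReal.ofReal (1 - p) = ENNReal.ofReal p := by
    rw [← ENNReal.ofReal_one, ← ENNReal.ofReal_sub _ hq, sub_sub_cancel]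
  calc geomMeasure p (Set.Ioi k) = ∑' i, f i := by
        simp [geomMeasure, Measure.sum_apply _ measurableSet_Ioi,
          Measure.dirac_apply' _ measurableSet_Ioi, f]
    _ = ∑' j, f (j + k) := ((add_left_injective k).tsum_eq hsupp).symm
    _ = ENNReal.ofReal ((1 - p) ^ k) := by
        simp_rw [hshift, ENNReal.tsum_mul_left, ENNReal.tsum_geometric, hp,
          ENNReal.mul_inv_cancel (ENNReal.ofReal_pos.2 hp0).ne' ENNReal.ofReal_ne_top, mul_one]

section Geometric

variable {Ω : Type*} [MeasurableSpace Ω] {μ : Measure Ω} {X Y : Ω → ℕ} {p : ℝ}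

lemma measure_lt_of_map_eq_geomMeasure (hp0 : 0 < p) (hp1 : p ≤ 1) (hX : Measurable X)
    (hXd : μ.map X = geomMeasure p) (k : ℕ) :
    μ {ω | k < X ω} = ENNReal.ofReal ((1 - p) ^ k) := by
  rw [← geomMeasure_Ioi hp0 hp1, ← hXd, Measure.map_apply hX measurableSet_Ioi]
  rfl

lemma integrable_natCast_of_map_eq_geomMeasure (hp0 : 0 < p) (hp1 : p ≤ 1) (hX : Measurable X)
    (hXd : μ.map X = geomMeasure p) : Integrable (fun ω => (X ω : ℝ)) μ :=
  integrable_natCast_of_measure_lt_eq_pow hX (by linarith) (by linarith)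
    (measure_lt_of_map_eq_geomMeasure hp0 hp1 hX hXd)

lemma integral_natCast_of_map_eq_geomMeasure (hp0 : 0 < p) (hp1 : p ≤ 1) (hX : Measurable X)
    (hXd : μ.map X = geomMeasure p) : ∫ ω, (X ω : ℝ) ∂μ = p⁻¹ := by
  rw [integral_natCast_of_measure_lt_eq_pow hX (by linarith) (by linarith)
    (measure_lt_of_map_eq_geomMeasure hp0 hp1 hX hXd), sub_sub_cancel]

lemma integral_abs_sub_of_map_eq_geomMeasure (hp0 : 0 < p) (hp1 : p ≤ 1) (hX : Measurable X)
    (hY : Measurable Y) (hXY : IndepFun X Y μ) (hXd : μ.map X = geomMeasure p)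
    (hYd : μ.map Y = geomMeasure p) :
    ∫ ω, |(X ω : ℝ) - Y ω| ∂μ = 2 * (1 - p) / (p * (2 - p)) := by
  rw [integral_abs_sub_of_indepFun hX hY hXY (by linarith) (by linarith) (by linarith)
    (by linarith) (measure_lt_of_map_eq_geomMeasure hp0 hp1 hX hXd)
    (measure_lt_of_map_eq_geomMeasure hp0 hp1 hY hYd), sub_sub_cancel,
    show 1 - (1 - p) * (1 - p) = p * (2 - p) by ring]
  have : 2 - p ≠ 0 := by linarith
  field_simp
  ring

end Geometric

theorem mean_perimeter_geometric
    {Ω : Type*} [MeasurableSpace Ω] (μ : Measure Ω) [IsProbabilityMeasure μ]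
    (p : ℝ) (hp : p ∈ Set.Ioo (0 : ℝ) 1) (n : ℕ) (hn : 2 ≤ n) (x : ℕ → Ω → ℕ)
    (hmeas : ∀ i, i < n → Measurable (x i))
    (hdist : ∀ i, i < n → Measure.map (x i) μ = geomMeasure p)
    (hindep : iIndepFun (fun i : Fin n => x i) μ) :
    ∫ ω, ((2 * n : ℝ) + (x 0 ω : ℝ) + (x (n - 1) ω : ℝ)
        + ∑ i ∈ Finset.Icc 1 (n - 1), |(x i ω : ℝ) - (x (i - 1) ω : ℝ)|) ∂μ
      = (2 + (2 + 2 * p - 2 * p ^ 2) * (n : ℝ)) / (p * (2 - p)) := by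
  obtain ⟨hp0, hp1⟩ := hp
  have h0 : 0 < n := by omega
  have hlast : n - 1 < n := by omega
  have hIcc {i : ℕ} (hi : i ∈ Finset.Icc 1 (n - 1)) : i < n ∧ i - 1 < n ∧ i ≠ i - 1 := by
    rw [Finset.mem_Icc] at hi; omega
  have hint (i : ℕ) (hi : i < n) : Integrable (fun ω => (x i ω : ℝ)) μ :=
    integrable_natCast_of_map_eq_geomMeasure hp0 hp1.le (hmeas i hi) (hdist i hi)
  have hmean (i : ℕ) (hi : i < n) : ∫ ω, (x i ω : ℝ) ∂μ = p⁻¹ :=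
    integral_natCast_of_map_eq_geomMeasure hp0 hp1.le (hmeas i hi) (hdist i hi)
  have hgap (i : ℕ) (hi : i ∈ Finset.Icc 1 (n - 1)) :
      ∫ ω, |(x i ω : ℝ) - (x (i - 1) ω : ℝ)| ∂μ = 2 * (1 - p) / (p * (2 - p)) := by
    obtain ⟨hi, hi', hne⟩ := hIcc hi
    exact integral_abs_sub_of_map_eq_geomMeasure hp0 hp1.le (hmeas i hi) (hmeas _ hi')
      (hindep.indepFun (i := ⟨i, hi⟩) (j := ⟨i - 1, hi'⟩) (by simpa using hne))
      (hdist i hi) (hdist _ hi')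
  have hgapInt (i : ℕ) (hi : i ∈ Finset.Icc 1 (n - 1)) :
      Integrable (fun ω => |(x i ω : ℝ) - (x (i - 1) ω : ℝ)|) μ :=
    ((hint i (hIcc hi).1).sub (hint _ (hIcc hi).2.1)).abs
  have hfirst : Integrable (fun ω => (2 * n : ℝ) + x 0 ω) μ := (integrable_const _).add (hint 0 h0)
  have hends : Integrable (fun ω => (2 * n : ℝ) + x 0 ω + x (n - 1) ω) μ :=
    hfirst.add (hint _ hlast)
  rw [integral_add hends (integrable_finsetSum _ hgapInt), integral_add hfirst (hint _ hlast),
    integral_add (integrable_const _) (hint 0 h0), integral_const, integral_finsetSum _ hgapInt,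
    Finset.sum_congr rfl hgap, hmean 0 h0, hmean _ hlast, Finset.sum_const, Nat.card_Icc,
    probReal_univ, one_smul, nsmul_eq_mul, Nat.add_sub_cancel, Nat.cast_sub h0, Nat.cast_one]
  have : 2 - p ≠ 0 := by linarith
  field_simp
  ring
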